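/- arXiv:1308.3020 — 3 statements merged into one kernel-verified Lean document; each statement's English description precedes it below -/
import Mathlib

section
/- Let f(u) = (1/2)‖y − u‖² be the squared-error loss and P a convex penalty function on ℝ^p. If β₁ and β₂ both minimize β ↦ f(Xβ) + λ·P(β) over ℝ^p, then Xβ₁ = Xβ₂. Consequently, for λ > 0, the value P(β̂) is the same for every minimizer β̂. -/
open Matrix BigOperators

/-- If β₁ and β₂ both minimize β ↦ (1/2)‖y − Xβ‖² + λ·P(β) with P convex and λ ≥ 0,
then Xβ₁ = Xβ₂; consequently, for λ > 0 the penalty value P(β̂) is the same at every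
minimizer. -/
theorem fitted_values_unique {n p : ℕ} (y : Fin n → ℝ) (X : Matrix (Fin n) (Fin p) ℝ)
    (lam : ℝ) (hlam : 0 ≤ lam) (P : (Fin p → ℝ) → ℝ)
    (hP : ConvexOn ℝ Set.univ P)
    (β₁ β₂ : Fin p → ℝ)
    (h₁ : IsMinOn (fun β : Fin p → ℝ =>
      (1 / 2) * (∑ i, (y i - X.mulVec β i) ^ 2) + lam * P β) Set.univ β₁)
    (h₂ : IsMinOn (fun β : Fin p → ℝ =>
      (1 / 2) * (∑ i, (y i - X.mulVec β i) ^ 2) + lam * P β) Set.univ β₂) :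
    X.mulVec β₁ = X.mulVec β₂ ∧ (0 < lam → P β₁ = P β₂) := by
  set u := X.mulVec β₁ with hu
  set v := X.mulVec β₂ with hv
  set βm := (1/2 : ℝ) • β₁ + (1/2 : ℝ) • β₂ with hβm
  have hmv : X.mulVec βm = (1/2 : ℝ) • u + (1/2 : ℝ) • v := by
    simp [hβm, Matrix.mulVec_add, Matrix.mulVec_smul, hu, hv]
  have hPm : P βm ≤ (1/2) * P β₁ + (1/2) * P β₂ := by
    have := hP.2 (Set.mem_univ β₁) (Set.mem_univ β₂)
      (by norm_num : (0:ℝ) ≤ 1/2) (by norm_num : (0:ℝ) ≤ 1/2) (by norm_num)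
    rw [hβm]; simpa [one_div, smul_eq_mul] using this
  set S := ∑ i, (u i - v i)^2 with hS
  have hQ : ∑ i, (y i - X.mulVec βm i)^2
      = (1/2) * (∑ i, (y i - u i)^2) + (1/2) * (∑ i, (y i - v i)^2) - (1/4) * S := by
    rw [hmv, hS]
    rw [Finset.mul_sum, Finset.mul_sum, Finset.mul_sum, ← Finset.sum_add_distrib,
      ← Finset.sum_sub_distrib]
    apply Finset.sum_congr rfl
    intro i _
    simp only [Pi.add_apply, Pi.smul_apply, smul_eq_mul]
    ring
  have e12 : (1/2) * (∑ i, (y i - u i)^2) + lam * P β₁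
      = (1/2) * (∑ i, (y i - v i)^2) + lam * P β₂ := by
    have a := isMinOn_iff.mp h₁ β₂ (Set.mem_univ _)
    have b := isMinOn_iff.mp h₂ β₁ (Set.mem_univ _)
    simp only [← hu, ← hv] at a b
    linarith
  have hm : (1/2) * (∑ i, (y i - u i)^2) + lam * P β₁
      ≤ (1/2) * (∑ i, (y i - X.mulVec βm i)^2) + lam * P βm :=
    isMinOn_iff.mp h₁ βm (Set.mem_univ _)
  have hSle : S ≤ 0 := by
    have hlP : lam * P βm ≤ lam * ((1/2) * P β₁ + (1/2) * P β₂) :=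
      mul_le_mul_of_nonneg_left hPm hlam
    rw [hQ] at hm
    nlinarith
  have hSge : 0 ≤ S := Finset.sum_nonneg fun i _ => sq_nonneg _
  have hS0 : S = 0 := le_antisymm hSle hSge
  have huv : u = v := by
    funext i
    have h0 : ∀ j ∈ Finset.univ, (u j - v j)^2 = 0 := by
      intro j _
      have := (Finset.sum_eq_zero_iff_of_nonneg (fun j _ => sq_nonneg (u j - v j))).mp
        (hS.symm.trans hS0) j (Finset.mem_univ j)
      exact this
    have := h0 i (Finset.mem_univ i)
    have := pow_eq_zero_iff (n := 2) (by norm_num) |>.mp this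
    linarith [sub_eq_zero.mp this]
  refine ⟨huv, fun hl => ?_⟩
  have : lam * P β₁ = lam * P β₂ := by
    rw [huv] at e12
    linarith
  exact mul_left_cancel₀ (ne_of_gt hl) this
end

section
/- Let C ⊆ ℝ^p be a closed convex set with 0 in its relative interior, X ∈ ℝ^{n×p}, and let P denote orthogonal projection onto X·C^⊥ where C^⊥ = {v : v ⊥ span(C)}. Then for every y ∈ ℝ^n, the supremum of η ↦ ηᵀ Xᵀ (I − P) y over η in the polar set C° is finite. -/
open Set Matrix

/-!
With `w = (I − P) y`, the vector `z = Xᵀ w` is orthogonal to `C^⊥` because `w ⊥ X·C^⊥`, so `z`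
lies in `span C`. Then `ηᵀ Xᵀ w = ⟪z, η⟫`, and since `C` contains the ball of radius `r` of
`span C`, testing `η ∈ C°` against `(r / ‖z‖) • z ∈ C` gives `⟪z, η⟫ ≤ ‖z‖ / r`.
-/

section

variable {E F : Type*} [NormedAddCommGroup E] [InnerProductSpace ℝ E]
  [NormedAddCommGroup F] [InnerProductSpace ℝ F]

open RealInnerProductSpace

theorem inner_le_norm_div_of_mem_polar {K : Submodule ℝ E} {C : Set E} {r : ℝ} (hr : 0 < r)
    (hball : ∀ x ∈ K, ‖x‖ ≤ r → x ∈ C) {η : E} (hη : ∀ u ∈ C, ⟪u, η⟫ ≤ 1) {z : E}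
    (hz : z ∈ K) : ⟪z, η⟫ ≤ ‖z‖ / r := by
  rcases eq_or_ne z 0 with rfl | hz0
  · simp
  have hnorm : 0 < ‖z‖ := norm_pos_iff.mpr hz0
  have hxC : (r / ‖z‖) • z ∈ C := by
    refine hball _ (K.smul_mem _ hz) ?_
    rw [norm_smul, Real.norm_of_nonneg (by positivity), div_mul_cancel₀ _ hnorm.ne']
  have := hη _ hxC
  rw [real_inner_smul_left, div_mul_eq_mul_div, div_le_one hnorm] at this
  rw [le_div_iff₀ hr]
  linarith

theorem adjoint_mem_of_mem_orthogonal_span_image [FiniteDimensional ℝ E] [FiniteDimensional ℝ F]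
    (L : E →ₗ[ℝ] F) (K : Submodule ℝ E) [K.HasOrthogonalProjection] {w : F}
    (hw : w ∈ (Submodule.span ℝ (L '' Kᗮ))ᗮ) : LinearMap.adjoint L w ∈ K := by
  rw [← K.orthogonal_orthogonal]
  intro v hv
  rw [LinearMap.adjoint_inner_right]
  exact Submodule.inner_right_of_mem_orthogonal (Submodule.subset_span (mem_image_of_mem L hv)) hw

end

theorem support_process_bounded_general {n p : ℕ} (C : Set (EuclideanSpace ℝ (Fin p)))
    (r : ℝ) (hr : 0 < r)
    (hrel : ∀ x : EuclideanSpace ℝ (Fin p), ‖x‖ ≤ r →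
      (↑(Submodule.orthogonalProjectionOnto (Submodule.span ℝ C) x) : EuclideanSpace ℝ (Fin p)) ∈ C)
    (X : Matrix (Fin n) (Fin p) ℝ) (y : EuclideanSpace ℝ (Fin n)) :
    ∃ M : ℝ, ∀ η ∈ {v : EuclideanSpace ℝ (Fin p) | ∀ u ∈ C, inner ℝ u v ≤ (1 : ℝ)},
      (inner ℝ ((WithLp.equiv 2 (Fin n → ℝ)).symm (X.mulVec η))
        (y - ↑(Submodule.orthogonalProjectionOnto
          (Submodule.span ℝ
            ((fun v : EuclideanSpace ℝ (Fin p) =>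
                (WithLp.equiv 2 (Fin n → ℝ)).symm (X.mulVec v)) ''
              (((Submodule.span ℝ C)ᗮ : Submodule ℝ (EuclideanSpace ℝ (Fin p))) :
                Set (EuclideanSpace ℝ (Fin p))))) y)) : ℝ) ≤ M := by
  set K := Submodule.span ℝ C
  set L := Matrix.toEuclideanLin X
  set W := Submodule.span ℝ (L '' Kᗮ)
  set w := y - W.starProjection y
  change ∃ M : ℝ, ∀ η ∈ {v | ∀ u ∈ C, inner ℝ u v ≤ (1 : ℝ)}, inner ℝ (L η) w ≤ M
  have hball : ∀ x ∈ K, ‖x‖ ≤ r → x ∈ C := fun x hx hxr ↦ by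
    simpa [K.starProjection_eq_self_iff.mpr hx] using hrel x hxr
  have hzK : LinearMap.adjoint L w ∈ K :=
    adjoint_mem_of_mem_orthogonal_span_image L K (W.sub_starProjection_mem_orthogonal y)
  refine ⟨‖LinearMap.adjoint L w‖ / r, fun η hη ↦ ?_⟩
  rw [← LinearMap.adjoint_inner_right, real_inner_comm]
  exact inner_le_norm_div_of_mem_polar hr hball hη hzK

/-- For a closed convex `C ⊆ ℝᵖ` with `0` in its relative interior, the process
`η ↦ ηᵀ Xᵀ (I − P) y` is bounded above over the polar `C°`, where `P` is the orthogonal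
projection onto `X·C^⊥`. -/
theorem support_process_bounded {n p : ℕ} (C : Set (EuclideanSpace ℝ (Fin p)))
    (hC : IsClosed C) (hconv : Convex ℝ C)
    (r : ℝ) (hr : 0 < r)
    (hrel : ∀ x : EuclideanSpace ℝ (Fin p), ‖x‖ ≤ r →
      (↑(Submodule.orthogonalProjectionOnto (Submodule.span ℝ C) x) : EuclideanSpace ℝ (Fin p)) ∈ C)
    (X : Matrix (Fin n) (Fin p) ℝ) (y : EuclideanSpace ℝ (Fin n)) :
    ∃ M : ℝ, ∀ η ∈ {v : EuclideanSpace ℝ (Fin p) | ∀ u ∈ C, inner ℝ u v ≤ (1 : ℝ)},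
      (inner ℝ ((WithLp.equiv 2 (Fin n → ℝ)).symm (X.mulVec η))
        (y - ↑(Submodule.orthogonalProjectionOnto
          (Submodule.span ℝ
            ((fun v : EuclideanSpace ℝ (Fin p) =>
                (WithLp.equiv 2 (Fin n → ℝ)).symm (X.mulVec v)) ''
              (((Submodule.span ℝ C)ᗮ : Submodule ℝ (EuclideanSpace ℝ (Fin p))) :
                Set (EuclideanSpace ℝ (Fin p))))) y)) : ℝ) ≤ M :=
  support_process_bounded_general C r hr hrel X y
end

section
/- Let Z₁, …, Z_p be i.i.d. standard normal random variables on ℝ, p ≥ 2, and let Z_(1) ≥ Z_(2) be the two largest order statistics of (|Z₁|, …, |Z_p|). Then the statistic (1 − Φ(Z_(1)))/(1 − Φ(Z_(2))) is uniformly distributed on [0,1], where Φ is the standard normal CDF. -/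
/-!
Put `Uᵢ = 2 (1 - Φ |Zᵢ|)`. This is the cdf of the law of `-|Z|` evaluated at `-|Zᵢ|`, so by the
probability integral transform the `Uᵢ` are i.i.d. uniform on `[0, 1]`, and since `x ↦ 2 (1 - Φ x)`
is decreasing the statistic is the ratio `U_(1) / U_(2)` of the two smallest `Uᵢ`. Off a null set,
`U_(1) / U_(2) ≤ t` is the disjoint union over `i` of the events `Uᵢ ≤ t · minⱼ≠ᵢ Uⱼ`; as `Uᵢ` is
uniform and independent of `minⱼ≠ᵢ Uⱼ ∈ [0, 1]`, each has probability `t · P(Uᵢ ≤ minⱼ≠ᵢ Uⱼ)`.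
Summing over `i` gives `t · P(U_(1) / U_(2) ≤ 1) = t`.
-/

open MeasureTheory ProbabilityTheory Set Filter Topology Function

local notation "𝕌" => volume.restrict (Icc (0 : ℝ) 1)

instance : IsProbabilityMeasure 𝕌 := ⟨by simp⟩

lemma uniform_Iic {s : ℝ} (hs : s ≤ 1) :
    𝕌 (Iic s) = ENNReal.ofReal s := by
  have : Iic s ∩ Icc 0 1 = Icc 0 s := by
    ext x; simp only [mem_inter_iff, mem_Iic, mem_Icc]; grind
  rw [Measure.restrict_apply measurableSet_Iic, this, Real.volume_Icc, sub_zero]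

lemma eq_uniform_of_forall_Iic (ν : Measure ℝ) [IsProbabilityMeasure ν]
    (h : ∀ t ∈ Icc (0 : ℝ) 1, ν (Iic t) = ENNReal.ofReal t) :
    ν = 𝕌 := by
  refine Measure.ext_of_Iic _ _ fun t => ?_
  rcases le_or_gt t 1 with ht1 | ht1
  · rw [uniform_Iic ht1]
    rcases le_or_gt 0 t with ht0 | ht0
    · exact h t ⟨ht0, ht1⟩
    · rw [ENNReal.ofReal_of_nonpos ht0.le, ← nonpos_iff_eq_zero, ← ENNReal.ofReal_zero,
        ← h 0 ⟨le_rfl, zero_le_one⟩]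
      exact measure_mono (Iic_subset_Iic.2 ht0.le)
  · have hν : ν (Iic 1) ≤ ν (Iic t) := measure_mono (Iic_subset_Iic.2 ht1.le)
    have hU : 𝕌 (Iic 1) ≤ 𝕌 (Iic t) := measure_mono (Iic_subset_Iic.2 ht1.le)
    rw [h 1 ⟨zero_le_one, le_rfl⟩, ENNReal.ofReal_one] at hν
    rw [uniform_Iic le_rfl, ENNReal.ofReal_one] at hU
    rw [le_antisymm prob_le_one hν, le_antisymm prob_le_one hU]

namespace ProbabilityTheory

@[fun_prop]
lemma continuous_cdf (μ : Measure ℝ) [IsProbabilityMeasure μ] [NullSingletonClass μ] :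
    Continuous (cdf μ) := by
  refine continuous_iff_continuousAt.2 fun x => ?_
  rw [(monotone_cdf μ).continuousAt_iff_leftLim_eq_rightLim, StieltjesFunction.rightLim_eq]
  have h := (cdf μ).measure_singleton x
  rw [measure_cdf, measure_singleton, eq_comm, ENNReal.ofReal_eq_zero, sub_nonpos] at h
  exact le_antisymm ((monotone_cdf μ).leftLim_le le_rfl) h

theorem map_cdf_eq_uniform (μ : Measure ℝ) [IsProbabilityMeasure μ] [NullSingletonClass μ] :
    μ.map (cdf μ) = 𝕌 := by
  have hF := continuous_cdf μ
  have := Measure.isProbabilityMeasure_map (μ := μ) hF.measurable.aemeasurable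
  refine eq_uniform_of_forall_Iic _ fun t ⟨ht0, ht1⟩ => ?_
  rw [Measure.map_apply hF.measurable measurableSet_Iic]
  rcases ht1.eq_or_lt with rfl | ht1
  · rw [eq_univ_of_forall (s := cdf μ ⁻¹' Iic 1) (cdf_le_one μ), measure_univ, ENNReal.ofReal_one]
  set S := cdf μ ⁻¹' Iic t
  rcases S.eq_empty_or_nonempty with hS | hS
  · have : t ≤ 0 := ge_of_tendsto' (tendsto_cdf_atBot μ) fun x =>
      (not_le.1 fun hx => hS.subset (show x ∈ S from hx)).le
    rw [hS, measure_empty, ENNReal.ofReal_of_nonpos this]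
  obtain ⟨b, hb⟩ := eventually_atTop.1 ((tendsto_cdf_atTop μ).eventually (lt_mem_nhds ht1))
  have hSb : BddAbove S := ⟨b, fun x hx => not_lt.1 fun hbx => (hb x hbx.le).not_ge hx⟩
  have hc := (isClosed_Iic.preimage hF).csSup_mem hS hSb
  have hSc : S = Iic (sSup S) :=
    Subset.antisymm (fun x hx => le_csSup hSb hx) fun x hx => (monotone_cdf μ hx).trans hc
  obtain ⟨x, hx⟩ := mem_range_of_exists_le_of_exists_ge hF ⟨_, hc⟩ ⟨b, (hb b le_rfl).le⟩
  have hct : cdf μ (sSup S) = t :=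
    le_antisymm hc (hx ▸ monotone_cdf μ (le_csSup hSb (show x ∈ S from hx.le)))
  rw [hSc, ← ofReal_cdf, hct]

variable (μ : Measure ℝ) [NullSingletonClass μ]

lemma nullSingletonClass_map_neg_abs : NullSingletonClass (μ.map fun z => -|z|) := by
  refine ⟨fun y => ?_⟩
  rw [Measure.map_apply (by fun_prop) (measurableSet_singleton y)]
  refine measure_mono_null (t := {y, -y}) (fun z hz => ?_) ((toFinite _).measure_zero μ)
  rcases abs_choice z with h | h <;> simp_all [neg_eq_iff_eq_neg]

lemma measure_Iic_neg_of_map_neg_eq (hμ : μ.map Neg.neg = μ) (x : ℝ) :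
    μ (Iic (-x)) = μ (Ioi x) := by
  conv_lhs => rw [← hμ]
  rw [Measure.map_apply measurable_neg measurableSet_Iic, measure_congr Ioi_ae_eq_Ici]
  simp

lemma cdf_map_neg_abs [IsProbabilityMeasure μ] (hμ : μ.map Neg.neg = μ) {x : ℝ} (hx : 0 ≤ x) :
    cdf (μ.map fun z => -|z|) (-x) = 2 * (1 - cdf μ x) := by
  have hset : (fun z : ℝ => -|z|) ⁻¹' Iic (-x) = Iic (-x) ∪ Ici x := by
    ext z; simp only [mem_preimage, mem_Iic, mem_union, mem_Ici, neg_le_neg_iff, le_abs']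
  have hdisj : Disjoint (Iic (-x)) (Ioi x) :=
    disjoint_left.2 fun z h1 h2 => by simp only [mem_Iic, mem_Ioi] at h1 h2; linarith
  have := Measure.isProbabilityMeasure_map (μ := μ) (f := fun z => -|z|) (by fun_prop)
  rw [cdf_eq_real, measureReal_def, Measure.map_apply (by fun_prop) measurableSet_Iic, hset,
    measure_congr (EventuallyEq.rfl.union Ioi_ae_eq_Ici.symm), measure_union hdisj measurableSet_Ioi,
    measure_Iic_neg_of_map_neg_eq μ hμ, ← compl_Iic, prob_compl_eq_one_sub measurableSet_Iic,
    ← ofReal_cdf, ← ENNReal.ofReal_one, ← ENNReal.ofReal_sub _ (cdf_nonneg μ x),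
    ← ENNReal.ofReal_add (sub_nonneg.2 (cdf_le_one μ x)) (sub_nonneg.2 (cdf_le_one μ x)),
    ENNReal.toReal_ofReal (by linarith [cdf_le_one μ x])]
  ring

theorem map_two_mul_one_sub_cdf_abs [IsProbabilityMeasure μ] (hμ : μ.map Neg.neg = μ) :
    μ.map (fun z => 2 * (1 - cdf μ |z|)) = 𝕌 := by
  have := nullSingletonClass_map_neg_abs μ
  have := Measure.isProbabilityMeasure_map (μ := μ) (f := fun z => -|z|) (by fun_prop)
  calc μ.map (fun z => 2 * (1 - cdf μ |z|))
      = μ.map (cdf (μ.map fun z => -|z|) ∘ fun z => -|z|) := by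
        congr 1; funext z; exact (cdf_map_neg_abs μ hμ (abs_nonneg z)).symm
    _ = (μ.map fun z => -|z|).map (cdf (μ.map fun z => -|z|)) :=
        (Measure.map_map (continuous_cdf _).measurable (by fun_prop)).symm
    _ = 𝕌 := map_cdf_eq_uniform _

end ProbabilityTheory

namespace ProbabilityTheory.IndepFun

variable {Ω : Type*} [MeasurableSpace Ω] {P : Measure Ω} [IsProbabilityMeasure P] {X Y : Ω → ℝ}

lemma measure_mem_eq_lintegral (hXY : IndepFun X Y P) (hX : Measurable X) (hY : Measurable Y)
    {s : Set (ℝ × ℝ)} (hs : MeasurableSet s) :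
    P ((fun ω => (X ω, Y ω)) ⁻¹' s) = ∫⁻ ω, P.map X ((fun x => (x, Y ω)) ⁻¹' s) ∂P := by
  rw [← Measure.map_apply (hX.prodMk hY) hs, hXY.map_prod_eq_prod_map_map hX.aemeasurable
    hY.aemeasurable, Measure.prod_apply_symm hs, lintegral_map (measurable_measure_prodMk_right hs) hY]

lemma measure_eq_eq_zero (hXY : IndepFun X Y P) (hX : Measurable X) (hY : Measurable Y)
    [NullSingletonClass (P.map X)] : P {ω | X ω = Y ω} = 0 := by
  have := hXY.measure_mem_eq_lintegral hX hY (measurableSet_diagonal (α := ℝ))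
  simp_all [diagonal]

lemma measure_le_mul_eq (hXY : IndepFun X Y P) (hX : Measurable X) (hY : Measurable Y)
    (hXlaw : P.map X = 𝕌) (hY01 : ∀ᵐ ω ∂P, Y ω ∈ Icc 0 1)
    {t : ℝ} (ht0 : 0 ≤ t) (ht1 : t ≤ 1) :
    P {ω | X ω ≤ t * Y ω} = ENNReal.ofReal t * ∫⁻ ω, ENNReal.ofReal (Y ω) ∂P := by
  have hs : MeasurableSet {p : ℝ × ℝ | p.1 ≤ t * p.2} := measurableSet_le (by fun_prop) (by fun_prop)
  rw [← lintegral_const_mul _ hY.ennreal_ofReal]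
  refine (hXY.measure_mem_eq_lintegral hX hY hs).trans ?_
  rw [hXlaw]
  refine lintegral_congr_ae (hY01.mono fun ω hω => ?_)
  simp only
  rw [← ENNReal.ofReal_mul ht0, ← uniform_Iic (mul_le_one₀ ht1 hω.1 hω.2)]
  rfl

end ProbabilityTheory.IndepFun

lemma ProbabilityTheory.iIndepFun.map_fun_comp_eq_pi {ι Ω : Type*} [Fintype ι] [MeasurableSpace Ω]
    {P : Measure Ω} [IsProbabilityMeasure P] {Z : ι → Ω → ℝ} (hind : iIndepFun Z P)
    (hmeas : ∀ i, Measurable (Z i)) {μ : Measure ℝ} (hdist : ∀ i, P.map (Z i) = μ) {f : ℝ → ℝ}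
    (hf : Measurable f) :
    P.map (fun ω i => f (Z i ω)) = Measure.pi fun _ => μ.map f :=
  calc P.map (fun ω i => f (Z i ω))
      = (P.map fun ω i => Z i ω).map fun v i => f (v i) :=
        (Measure.map_map (measurable_pi_lambda _ fun i => hf.comp (measurable_pi_apply i))
          (measurable_pi_lambda _ hmeas)).symm
    _ = (Measure.pi fun i => P.map (Z i)).map fun v i => f (v i) := by
        rw [(iIndepFun_iff_map_fun_eq_pi_map fun i => (hmeas i).aemeasurable).1 hind]
    _ = Measure.pi fun i => (P.map (Z i)).map f := Measure.pi_map_pi fun _ => hf.aemeasurable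
    _ = Measure.pi fun _ => μ.map f := by simp only [hdist]

namespace OrderStatistics

variable {ι : Type*} [Finite ι]

noncomputable def secondSmallest (u : ι → ℝ) : ℝ :=
  ⨅ q : {q : ι × ι // q.1 ≠ q.2}, max (u q.1.1) (u q.1.2)

noncomputable def minExcept (i : ι) (u : ι → ℝ) : ℝ := ⨅ j : {j // j ≠ i}, u j

noncomputable def smallestRatio (u : ι → ℝ) : ℝ := (⨅ i, u i) / secondSmallest u

lemma minExcept_le (u : ι → ℝ) {i j : ι} (hj : j ≠ i) : minExcept i u ≤ u j :=
  ciInf_le (finite_range _).bddBelow (⟨j, hj⟩ : {j // j ≠ i})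

variable [Nontrivial ι]

lemma exists_minExcept_eq (i : ι) (u : ι → ℝ) : ∃ j ≠ i, minExcept i u = u j := by
  obtain ⟨j, hj⟩ := exists_ne i
  have : Nonempty {j // j ≠ i} := ⟨⟨j, hj⟩⟩
  obtain ⟨⟨k, hk⟩, h⟩ := exists_eq_ciInf_of_finite (f := fun j : {j // j ≠ i} => u j)
  exact ⟨k, hk, h.symm⟩

lemma minExcept_pos {u : ι → ℝ} (hu : ∀ i, 0 < u i) (i : ι) : 0 < minExcept i u := by
  obtain ⟨j, -, h⟩ := exists_minExcept_eq i u
  exact h ▸ hu j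

lemma exists_le_minExcept (u : ι → ℝ) : ∃ i, u i ≤ minExcept i u := by
  obtain ⟨i, hi⟩ := exists_eq_ciInf_of_finite (f := u)
  obtain ⟨j, -, hj⟩ := exists_minExcept_eq i u
  exact ⟨i, hj ▸ hi ▸ ciInf_le (finite_range u).bddBelow j⟩

lemma smallestRatio_eq {u : ι → ℝ} {i : ι} (h : u i ≤ minExcept i u) :
    smallestRatio u = u i / minExcept i u := by
  have hmin : ⨅ j, u j = u i := by
    refine le_antisymm (ciInf_le (finite_range u).bddBelow i) (le_ciInf fun j => ?_)
    rcases eq_or_ne j i with rfl | hj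
    · exact le_rfl
    · exact h.trans (minExcept_le u hj)
  have hsecond : secondSmallest u = minExcept i u := by
    obtain ⟨j, hj, hM⟩ := exists_minExcept_eq i u
    have : Nonempty {q : ι × ι // q.1 ≠ q.2} := ⟨⟨(j, i), hj⟩⟩
    refine le_antisymm ?_ (le_ciInf fun ⟨(a, b), hab⟩ => ?_)
    · calc secondSmallest u ≤ max (u j) (u i) :=
            ciInf_le (finite_range _).bddBelow (⟨(j, i), hj⟩ : {q : ι × ι // q.1 ≠ q.2})
        _ = minExcept i u := by rw [max_eq_left (hM ▸ h), hM]
    · rcases eq_or_ne a i with rfl | ha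
      · exact (minExcept_le u hab.symm).trans (le_max_right _ _)
      · exact (minExcept_le u ha).trans (le_max_left _ _)
  rw [smallestRatio, hmin, hsecond]

lemma le_minExcept_of_le_mul {u : ι → ℝ} (hu : ∀ i, 0 < u i) {i : ι} {t : ℝ} (ht : t ≤ 1)
    (h : u i ≤ t * minExcept i u) : u i ≤ minExcept i u :=
  h.trans (mul_le_of_le_one_left (minExcept_pos hu i).le ht)

lemma smallestRatio_le_iff {u : ι → ℝ} (hu : ∀ i, 0 < u i) {t : ℝ} (ht : t ≤ 1) :
    smallestRatio u ≤ t ↔ ∃ i, u i ≤ t * minExcept i u := by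
  constructor
  · obtain ⟨i, hi⟩ := exists_le_minExcept u
    rw [smallestRatio_eq hi, div_le_iff₀ (minExcept_pos hu i)]
    exact fun h => ⟨i, h⟩
  · rintro ⟨i, hi⟩
    rw [smallestRatio_eq (le_minExcept_of_le_mul hu ht hi), div_le_iff₀ (minExcept_pos hu i)]
    exact hi

lemma smallestRatio_comp_antitone {ψ : ℝ → ℝ} (hψ : Antitone ψ) (hc : Continuous ψ)
    (a : ι → ℝ) :
    ψ (sSup {x | ∃ i, x = a i}) / ψ (sSup {x | ∃ i j, i ≠ j ∧ x = min (a i) (a j)}) =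
      smallestRatio fun i => ψ (a i) := by
  have : Nonempty {q : ι × ι // q.1 ≠ q.2} :=
    let ⟨i, j, hij⟩ := exists_pair_ne ι; ⟨⟨(i, j), hij⟩⟩
  have h1 : {x | ∃ i, x = a i} = range a := by ext; simp [eq_comm]
  have h2 : {x | ∃ i j, i ≠ j ∧ x = min (a i) (a j)} =
      range fun q : {q : ι × ι // q.1 ≠ q.2} => min (a q.1.1) (a q.1.2) := by
    ext; simp [eq_comm]
  rw [h1, h2]
  change ψ (⨆ i, a i) / ψ (⨆ q : {q : ι × ι // q.1 ≠ q.2}, min (a q.1.1) (a q.1.2)) = _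
  rw [hψ.map_ciSup_of_continuousAt hc.continuousAt (finite_range _).bddAbove,
    hψ.map_ciSup_of_continuousAt hc.continuousAt (finite_range _).bddAbove, smallestRatio,
    secondSmallest]
  simp only [hψ.map_min]

lemma smallestRatio_two_mul_one_sub_cdf (μ : Measure ℝ) [IsProbabilityMeasure μ]
    [NullSingletonClass μ] (a : ι → ℝ) :
    smallestRatio (fun i => 2 * (1 - cdf μ (a i))) =
      (1 - cdf μ (sSup {x | ∃ i, x = a i})) /
        (1 - cdf μ (sSup {x | ∃ i j, i ≠ j ∧ x = min (a i) (a j)})) := by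
  have hanti : Antitone fun x => 2 * (1 - cdf μ x) := fun x y h => by
    linarith [monotone_cdf μ h]
  rw [← smallestRatio_comp_antitone hanti (by fun_prop) a,
    mul_div_mul_left _ _ two_ne_zero]

omit [Nontrivial ι] in
lemma measurable_minExcept (i : ι) : Measurable (minExcept i) :=
  Measurable.iInf fun _ => measurable_pi_apply _

omit [Nontrivial ι] in
lemma measurable_smallestRatio : Measurable (smallestRatio (ι := ι)) :=
  (Measurable.iInf fun i => measurable_pi_apply i).div
    (Measurable.iInf fun _ => (measurable_pi_apply _).max (measurable_pi_apply _))

end OrderStatistics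

section UniformPi

open OrderStatistics

variable {ι : Type*} [Fintype ι]

lemma ae_uniform_mem_Ioc : ∀ᵐ x ∂𝕌, x ∈ Ioc (0 : ℝ) 1 := by
  filter_upwards [ae_restrict_mem measurableSet_Icc, compl_mem_ae_iff.2 (measure_singleton 0)]
    with x hx hx0
  exact ⟨lt_of_le_of_ne hx.1 (Ne.symm hx0), hx.2⟩

lemma ae_pi_uniform_mem_Ioc : ∀ᵐ u ∂(Measure.pi fun _ : ι => 𝕌), ∀ i, u i ∈ Ioc (0 : ℝ) 1 :=
  ae_all_iff.2 fun i => (measurePreserving_eval _ i).quasiMeasurePreserving.ae ae_uniform_mem_Ioc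

lemma iIndepFun_eval_pi_uniform : iIndepFun (fun i (u : ι → ℝ) => u i) (Measure.pi fun _ : ι => 𝕌) :=
  iIndepFun_pi (X := fun _ => id) fun _ => aemeasurable_id

lemma indepFun_eval_minExcept (i : ι) :
    IndepFun (fun u => u i) (minExcept i) (Measure.pi fun _ : ι => 𝕌) := by
  classical
  have h := iIndepFun_eval_pi_uniform.indepFun_finset {i} (Finset.univ.erase i) (by simp)
    fun _ => measurable_pi_apply _
  have hφ : Measurable fun v : ({i} : Finset ι) → ℝ => v ⟨i, Finset.mem_singleton_self i⟩ :=
    measurable_pi_apply _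
  have hψ : Measurable fun w : (Finset.univ.erase i) → ℝ =>
      ⨅ j : {j // j ≠ i}, w ⟨j, by simpa using j.2⟩ :=
    Measurable.iInf fun _ => measurable_pi_apply _
  exact h.comp hφ hψ

lemma measure_eval_eq_eval {i j : ι} (hij : i ≠ j) :
    (Measure.pi fun _ : ι => 𝕌) {u | u i = u j} = 0 := by
  have : NullSingletonClass ((Measure.pi fun _ : ι => 𝕌).map fun u => u i) := by
    rw [(measurePreserving_eval _ i).map_eq]; infer_instance
  exact (iIndepFun_eval_pi_uniform.indepFun hij).measure_eq_eq_zero (measurable_pi_apply i)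
    (measurable_pi_apply j)

variable [Nontrivial ι]

lemma measure_le_mul_minExcept (i : ι) {t : ℝ} (ht0 : 0 ≤ t) (ht1 : t ≤ 1) :
    (Measure.pi fun _ : ι => 𝕌) {u | u i ≤ t * minExcept i u} =
      ENNReal.ofReal t * ∫⁻ u, ENNReal.ofReal (minExcept i u) ∂(Measure.pi fun _ : ι => 𝕌) := by
  refine (indepFun_eval_minExcept i).measure_le_mul_eq (measurable_pi_apply i)
    (measurable_minExcept i) (measurePreserving_eval _ i).map_eq ?_ ht0 ht1
  filter_upwards [ae_pi_uniform_mem_Ioc] with u hu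
  obtain ⟨j, -, h⟩ := exists_minExcept_eq i u
  exact h ▸ Ioc_subset_Icc_self (hu j)

lemma measure_smallestRatio_le {t : ℝ} (ht : t ≤ 1) :
    (Measure.pi fun _ : ι => 𝕌) {u | smallestRatio u ≤ t} =
      ∑ i, (Measure.pi fun _ : ι => 𝕌) {u | u i ≤ t * minExcept i u} := by
  have hae : {u | smallestRatio u ≤ t} =ᵐ[Measure.pi fun _ : ι => 𝕌]
      ⋃ i, {u | u i ≤ t * minExcept i u} := by
    refine eventuallyEq_set.2 ?_
    filter_upwards [ae_pi_uniform_mem_Ioc] with u hu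
    rw [mem_iUnion]
    exact smallestRatio_le_iff (fun i => (hu i).1) ht
  have hdisj : Pairwise (AEDisjoint (Measure.pi fun _ : ι => 𝕌) on
      fun i => {u | u i ≤ t * minExcept i u}) := by
    refine fun i j hij => measure_mono_null_ae ?_ (measure_eval_eq_eval hij)
    filter_upwards [ae_pi_uniform_mem_Ioc] with u hu ⟨hi, hj⟩
    have hpos := fun k => (hu k).1
    exact le_antisymm ((le_minExcept_of_le_mul hpos ht hi).trans (minExcept_le u hij.symm))
      ((le_minExcept_of_le_mul hpos ht hj).trans (minExcept_le u hij))
  rw [measure_congr hae, measure_iUnion₀ hdisj fun i => (measurableSet_le (measurable_pi_apply i)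
    ((measurable_minExcept i).const_mul t)).nullMeasurableSet, tsum_fintype]

theorem map_smallestRatio_pi_uniform :
    (Measure.pi fun _ : ι => 𝕌).map smallestRatio = 𝕌 := by
  have := Measure.isProbabilityMeasure_map (μ := Measure.pi fun _ : ι => 𝕌)
    measurable_smallestRatio.aemeasurable
  have hone : ∑ i, ∫⁻ u, ENNReal.ofReal (minExcept i u) ∂(Measure.pi fun _ : ι => 𝕌) = 1 := by
    have h := measure_smallestRatio_le (ι := ι) le_rfl
    rw [Finset.sum_congr rfl fun i _ => measure_le_mul_minExcept i zero_le_one le_rfl] at h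
    simp only [ENNReal.ofReal_one, one_mul] at h
    rw [← h, ← prob_compl_eq_zero_iff (measurableSet_le measurable_smallestRatio measurable_const)]
    refine ae_iff.1 ?_
    filter_upwards [ae_pi_uniform_mem_Ioc] with u hu
    obtain ⟨i, hi⟩ := exists_le_minExcept u
    exact (smallestRatio_le_iff (fun i => (hu i).1) le_rfl).2 ⟨i, by rwa [one_mul]⟩
  refine eq_uniform_of_forall_Iic _ fun t ⟨ht0, ht1⟩ => ?_
  rw [Measure.map_apply measurable_smallestRatio measurableSet_Iic]
  calc _ = ∑ i, (Measure.pi fun _ : ι => 𝕌) {u | u i ≤ t * minExcept i u} :=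
        measure_smallestRatio_le ht1
    _ = ENNReal.ofReal t := by
      simp only [measure_le_mul_minExcept _ ht0 ht1, ← Finset.mul_sum, hone, mul_one]

end UniformPi

open OrderStatistics in
/-- For `Z₁, …, Z_p` i.i.d. standard normal (`p ≥ 2`), with `Z_(1) ≥ Z_(2)` the two
largest order statistics of `(|Z₁|, …, |Z_p|)`, the Kac–Rice statistic
`(1 − Φ(Z_(1)))/(1 − Φ(Z_(2)))` is uniform on `[0,1]`. -/
theorem kac_rice_orthonormal_uniform {p : ℕ} (hp : 2 ≤ p)
    {Ω : Type*} [MeasurableSpace Ω] (μpr : Measure Ω) [IsProbabilityMeasure μpr]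
    (Z : Fin p → Ω → ℝ) (hmeas : ∀ i, Measurable (Z i))
    (hind : iIndepFun Z μpr)
    (hdist : ∀ i, Measure.map (Z i) μpr = gaussianReal 0 1) :
    Measure.map (fun ω =>
        (1 - ((gaussianReal 0 1)
            (Set.Iic (sSup {x : ℝ | ∃ i : Fin p, x = |Z i ω|}))).toReal) /
        (1 - ((gaussianReal 0 1)
            (Set.Iic (sSup {x : ℝ | ∃ i j : Fin p, i ≠ j ∧
              x = min |Z i ω| |Z j ω|}))).toReal)) μpr
      = volume.restrict (Set.Icc (0 : ℝ) 1) := by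
  have : Nontrivial (Fin p) := Fin.nontrivial_iff_two_le.2 hp
  have : NullSingletonClass (gaussianReal 0 1) := nullSingletonClass_gaussianReal one_ne_zero
  have hsymm : (gaussianReal 0 1).map Neg.neg = gaussianReal 0 1 := by
    simpa using gaussianReal_map_neg (μ := 0) (v := 1)
  have hmeasU : Measurable fun z => 2 * (1 - cdf (gaussianReal 0 1) |z|) :=
    (by fun_prop : Continuous fun x => 2 * (1 - cdf (gaussianReal 0 1) x)).measurable.comp
      measurable_abs
  have hstat : (fun ω => (1 - ((gaussianReal 0 1) (Iic (sSup {x | ∃ i, x = |Z i ω|}))).toReal) /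
      (1 - ((gaussianReal 0 1) (Iic (sSup {x | ∃ i j, i ≠ j ∧ x = min |Z i ω| |Z j ω|}))).toReal))
      = smallestRatio ∘ fun ω i => 2 * (1 - cdf (gaussianReal 0 1) |Z i ω|) := by
    funext ω
    simp only [← measureReal_def, ← cdf_eq_real]
    exact (smallestRatio_two_mul_one_sub_cdf _ _).symm
  rw [hstat, ← Measure.map_map measurable_smallestRatio
      (measurable_pi_lambda (fun ω i => 2 * (1 - cdf (gaussianReal 0 1) |Z i ω|)) fun i =>
        hmeasU.comp (hmeas i)), hind.map_fun_comp_eq_pi hmeas hdist hmeasU,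
    map_two_mul_one_sub_cdf_abs _ hsymm, map_smallestRatio_pi_uniform]
end
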